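/- arXiv:2103.01335 — 5 statements merged into one kernel-verified Lean document; each statement's English description precedes it below -/
import Mathlib

section
/- A favored candidate does not imply an individually unfairly treated candidate on the platform: there exist a finite candidate type C (one may take C = Fin 12), an injective score function score : C → ℝ, a group assignment A : C → Fin 2, a platform Finset L ⊆ Finset.univ, a number k, and Finsets S_U ⊆ Finset.univ and S_L ⊆ L each of cardinality k, where S_U is score-consistent within groups over Finset.univ and S_L is score-consistent within groups over L, such that some candidate is favored (it lies in S_L but not in S_U) while no candidate belonging to L is treated individually unfairly (no c ∈ L satisfies c ∈ S_U and c ∉ S_L). (Proposition 2) -/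
/-
The candidate with the top universal score can simply be kept off the platform.
With a single group and `score c = c`, take `k = 1`: universally candidate 11 is
selected, on the platform `L = univ \ {11}` candidate 10 is. Then 10 is favored,
while the only candidate treated unfairly, 11, is not on the platform.
-/

/-- A Finset `S` is score-consistent within groups over the universe `V`:
whenever `x ∈ S` and `y ∈ V` is in the same group as `x` with a strictly higher
score, `y ∈ S` as well (a representative ranking keeps each group's selected
members as its top-scored available members). -/
def ScoreConsistent {C G : Type*} (score : C → ℝ) (A : C → G)
    (V S : Finset C) : Prop :=
  ∀ x ∈ S, ∀ y ∈ V, A y = A x → score y > score x → y ∈ S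

theorem scoreConsistent_singleton {C G : Type*} {score : C → ℝ} {A : C → G}
    {V : Finset C} {x : C} (hx : ∀ y ∈ V, A y = A x → score y ≤ score x) :
    ScoreConsistent score A V {x} := by
  intro x' hx' y hy hA hlt
  rw [Finset.mem_singleton] at hx'
  subst hx'
  exact absurd (hx y hy hA) (not_le.mpr hlt)

/-- **Proposition 2.** A favored candidate does not imply an individually
unfairly treated candidate on the platform: with candidates `Fin 12`, there are
an injective score, a group assignment into `Fin 2`, a platform `L`, a number
`k`, and score-consistent top-`k` selections `S_U` (from all candidates) and
`S_L` (from `L`), such that some candidate is favored while no candidate of `L`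
is treated individually unfairly. -/
theorem prop2_favored_not_implies_unfair :
    ∃ (score : Fin 12 → ℝ) (A : Fin 12 → Fin 2)
      (L S_U S_L : Finset (Fin 12)) (k : ℕ),
      Function.Injective score ∧
      L ⊆ Finset.univ ∧
      S_U ⊆ Finset.univ ∧ S_L ⊆ L ∧
      S_U.card = k ∧ S_L.card = k ∧
      ScoreConsistent score A Finset.univ S_U ∧
      ScoreConsistent score A L S_L ∧
      (∃ c, c ∈ S_L ∧ c ∉ S_U) ∧
      (∀ c ∈ L, ¬(c ∈ S_U ∧ c ∉ S_L)) := by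
  have top_overall : ∀ y : Fin 12, (y : ℕ) ≤ 11 := by decide
  have top_on_platform : ∀ y ∈ Finset.univ.erase (11 : Fin 12), (y : ℕ) ≤ 10 := by decide
  refine ⟨fun c => (c : ℕ), fun _ => 0, Finset.univ.erase 11, {11}, {10}, 1,
    Nat.cast_injective.comp Fin.val_injective, Finset.subset_univ _, Finset.subset_univ _,
    by decide, rfl, rfl, ?_, ?_, ⟨10, by decide⟩, by decide⟩
  · exact scoreConsistent_singleton fun y _ _ => by exact_mod_cast top_overall y
  · exact scoreConsistent_singleton fun y hy _ => by exact_mod_cast top_on_platform y hy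
end

section
/- Individual unfairness implies group unfairness: let score : C → ℝ be injective, A a group assignment, L a Finset of candidates (the platform members), S_U a Finset score-consistent within groups over Finset.univ, and S_L ⊆ L a Finset score-consistent within groups over L. If some candidate c ∈ L with A c = g is treated individually unfairly (c ∈ S_U and c ∉ S_L), then group g is treated unfairly, i.e., |{x ∈ S_L : A x = g}| < |{x ∈ S_U : A x = g}|. (Lemma 1, Section 3.6.3) -/
/-! A member `x` of `S_L` in the group of `c` must outscore `c`, since otherwise `c ∈ L`
would have been selected into `S_L`; scoring above `c ∈ S_U`, it is also in `S_U`. So the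
group's part of `S_L` is contained in its part of `S_U`, and strictly so because it misses `c`. -/

namespace ScoreConsistent

variable {C G : Type*} {score : C → ℝ} {A : C → G}

theorem mem_of_same_group_of_notMem {V W S T : Finset C} (hscore : Function.Injective score)
    (hS : ScoreConsistent score A V S) (hT : ScoreConsistent score A W T)
    {c x : C} (hcS : c ∈ S) (hcW : c ∈ W) (hcT : c ∉ T)
    (hxT : x ∈ T) (hxV : x ∈ V) (hxc : A x = A c) : x ∈ S := by
  have hne : score c ≠ score x := fun h => hcT (hscore h ▸ hxT)
  rcases hne.lt_or_gt with hlt | hgt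
  · exact hS c hcS x hxV hxc hlt
  · exact absurd (hT x hxT c hcW hxc.symm hgt) hcT

theorem filter_ssubset_filter_of_notMem [DecidableEq G] {V W S T : Finset C}
    (hscore : Function.Injective score) (hS : ScoreConsistent score A V S)
    (hT : ScoreConsistent score A W T) (hTV : T ⊆ V)
    {c : C} (hcS : c ∈ S) (hcW : c ∈ W) (hcT : c ∉ T) :
    T.filter (A · = A c) ⊂ S.filter (A · = A c) := by
  have hsub : T.filter (A · = A c) ⊆ S.filter (A · = A c) := fun x hx => by
    obtain ⟨hxT, hxc⟩ := Finset.mem_filter.mp hx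
    exact Finset.mem_filter.mpr
      ⟨mem_of_same_group_of_notMem hscore hS hT hcS hcW hcT hxT (hTV hxT) hxc, hxc⟩
  exact (Finset.ssubset_iff_of_subset hsub).mpr
    ⟨c, Finset.mem_filter.mpr ⟨hcS, rfl⟩, fun h => hcT (Finset.mem_filter.mp h).1⟩

end ScoreConsistent

theorem lemma1_individual_unfair_implies_group_unfair_general
    {C G : Type*} [Fintype C] [DecidableEq G]
    (score : C → ℝ) (hscore : Function.Injective score)
    (A : C → G) (L : Finset C)
    (S_U S_L : Finset C)
    (hU : ScoreConsistent score A Finset.univ S_U)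
    (hL : ScoreConsistent score A L S_L)
    (g : G) (c : C) (hcL : c ∈ L) (hcg : A c = g)
    (hcU : c ∈ S_U) (hcnL : c ∉ S_L) :
    (S_L.filter (fun x => A x = g)).card < (S_U.filter (fun x => A x = g)).card := by
  subst hcg
  exact Finset.card_lt_card <|
    hU.filter_ssubset_filter_of_notMem hscore hL (Finset.subset_univ _) hcU hcL hcnL

/-- **Lemma 1 (Section 3.6.3).** Individual unfairness implies group
unfairness: if a platform candidate `c` of group `g` lies in the universal
top-`k` `S_U` but not in the platform top-`k` `S_L`, then group `g` has
strictly fewer members in `S_L` than in `S_U`. -/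
theorem lemma1_individual_unfair_implies_group_unfair
    {C G : Type*} [Fintype C] [DecidableEq C] [DecidableEq G]
    (score : C → ℝ) (hscore : Function.Injective score)
    (A : C → G) (L : Finset C)
    (S_U S_L : Finset C) (hSL : S_L ⊆ L)
    (hU : ScoreConsistent score A Finset.univ S_U)
    (hL : ScoreConsistent score A L S_L)
    (g : G) (c : C) (hcL : c ∈ L) (hcg : A c = g)
    (hcU : c ∈ S_U) (hcnL : c ∉ S_L) :
    (S_L.filter (fun x => A x = g)).card < (S_U.filter (fun x => A x = g)).card :=
  lemma1_individual_unfair_implies_group_unfair_general score hscore A L S_U S_L hU hL g c hcL hcg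
    hcU hcnL
end

section
/- An individually fair solution does not imply group fairness: there exist a finite candidate type C, an injective score function score : C → ℝ, a group assignment A : C → Fin 2, a platform Finset L ⊆ Finset.univ, a number k, and Finsets S_U ⊆ Finset.univ and S_L ⊆ L each of cardinality k, where S_U is score-consistent within groups over Finset.univ and S_L is score-consistent within groups over L, such that no candidate of L is treated individually unfairly (every c ∈ L with c ∈ S_U satisfies c ∈ S_L), yet some group g is treated unfairly, i.e., |{c ∈ S_L : A c = g}| < |{c ∈ S_U : A c = g}|. (Lemma 3, Section 3.6.5) -/
theorem scoreConsistent_of_injective {C G : Type*} {A : C → G} (hA : Function.Injective A)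
    (score : C → ℝ) (V S : Finset C) : ScoreConsistent score A V S := by
  intro x _ y _ hyx hscore
  rw [hA hyx] at hscore
  exact absurd hscore (lt_irrefl _)

/-- **Lemma 3 (Section 3.6.5).** An individually fair solution does not imply
group fairness: there exist a finite candidate type `Fin n`, an injective
score, a group assignment into `Fin 2`, a platform `L`, and score-consistent
top-`k` selections `S_U` (from all candidates) and `S_L` (from `L`), such that
no platform candidate is treated individually unfairly, yet some group is
treated unfairly. -/
theorem lemma3_individual_fair_not_implies_group_fair :
    ∃ (n : ℕ) (score : Fin n → ℝ) (A : Fin n → Fin 2)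
      (L S_U S_L : Finset (Fin n)) (k : ℕ),
      Function.Injective score ∧
      L ⊆ Finset.univ ∧
      S_U ⊆ Finset.univ ∧ S_L ⊆ L ∧
      S_U.card = k ∧ S_L.card = k ∧
      ScoreConsistent score A Finset.univ S_U ∧
      ScoreConsistent score A L S_L ∧
      (∀ c ∈ L, c ∈ S_U → c ∈ S_L) ∧
      (∃ g : Fin 2,
        (S_L.filter (fun c => A c = g)).card <
        (S_U.filter (fun c => A c = g)).card) :=
  ⟨2, fun i => -(i : ℝ), id, {1}, {0}, {1}, 1,
    neg_injective.comp (Nat.cast_injective.comp Fin.val_injective),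
    Finset.subset_univ _, Finset.subset_univ _, subset_rfl, rfl, rfl,
    scoreConsistent_of_injective Function.injective_id _ _ _,
    scoreConsistent_of_injective Function.injective_id _ _ _,
    by decide, 0, by decide⟩
end

section
/- A group-fairness-aware solution implies individual fairness: let score : C → ℝ be injective, A a group assignment, L a Finset of candidates (the platform members), S_U a Finset score-consistent within groups over Finset.univ, and S_L ⊆ L a Finset score-consistent within groups over L. Suppose the solution is group-fair in the sense that for every group g, |{c ∈ S_L : A c = g}| ≥ min(|{c ∈ S_U : A c = g}|, |{c ∈ L : A c = g}|). Then no candidate on the platform is treated individually unfairly: for every c ∈ L, if c ∈ S_U then c ∈ S_L. (Lemma 4, Section 3.6.5) -/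
/-!
Suppose `c ∈ L ∩ S_U` but `c ∉ S_L`, and let `g` be its group. Score-consistency of `S_L` over `L`
forces every member of `S_L` in group `g` to score strictly above `c`, so `S_L` selects at most as
many members of `g` as there are platform members of `g` above `c`. But those members together
with `c` lie both in `L` and, by score-consistency of `S_U`, in `S_U`; hence there are strictly
fewer of them than `min(|S_U ∩ g|, |L ∩ g|)`, contradicting group fairness.
-/

open Finset

namespace ScoreConsistent

theorem self {C G : Type*} (score : C → ℝ) (A : C → G) (V : Finset C) :
    ScoreConsistent score A V V :=
  fun _ _ _ hy _ _ => hy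

variable {C G : Type*} [DecidableEq G] {score : C → ℝ} {A : C → G} {V S : Finset C} {c : C}

theorem filter_group_subset_filter_above (hS : ScoreConsistent score A V S)
    (hscore : Function.Injective score) (hSV : S ⊆ V) (hcV : c ∈ V) (hcS : c ∉ S) :
    {x ∈ S | A x = A c} ⊆ {x ∈ V | A x = A c ∧ score c < score x} := by
  intro x hx
  obtain ⟨hxS, hxg⟩ := mem_filter.mp hx
  have hne : score x ≠ score c := fun h => hcS (hscore h ▸ hxS)
  have hlt : score c < score x :=
    hne.lt_or_gt.resolve_left fun h => hcS (hS x hxS c hcV hxg.symm h)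
  exact mem_filter.mpr ⟨hSV hxS, hxg, hlt⟩

theorem card_filter_above_lt (hS : ScoreConsistent score A V S) (hcS : c ∈ S) :
    #{x ∈ V | A x = A c ∧ score c < score x} < #{x ∈ S | A x = A c} := by
  have hsub : {x ∈ V | A x = A c ∧ score c < score x} ⊆ {x ∈ S | A x = A c} := by
    intro x hx
    obtain ⟨hxV, hxg, hlt⟩ := mem_filter.mp hx
    exact mem_filter.mpr ⟨hS c hcS x hxV hxg hlt, hxg⟩
  exact card_lt_card ((ssubset_iff_of_subset hsub).mpr
    ⟨c, mem_filter.mpr ⟨hcS, rfl⟩, fun hc => (mem_filter.mp hc).2.2.false⟩)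

end ScoreConsistent

theorem lemma4_group_fair_implies_individual_fair_general
    {C G : Type*} [Fintype C] [DecidableEq G]
    (score : C → ℝ) (hscore : Function.Injective score)
    (A : C → G) (L : Finset C)
    (S_U S_L : Finset C) (hSL : S_L ⊆ L)
    (hU : ScoreConsistent score A Finset.univ S_U)
    (hL : ScoreConsistent score A L S_L)
    (hgroupfair : ∀ g : G,
      (S_L.filter (fun c => A c = g)).card ≥
        min ((S_U.filter (fun c => A c = g)).card)
            ((L.filter (fun c => A c = g)).card)) :
    ∀ c ∈ L, c ∈ S_U → c ∈ S_L := by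
  intro c hcL hcU
  by_contra hcSL
  have hSL_le : #{x ∈ S_L | A x = A c} ≤ #{x ∈ L | A x = A c ∧ score c < score x} :=
    card_le_card (hL.filter_group_subset_filter_above hscore hSL hcL hcSL)
  have hL_lt : #{x ∈ L | A x = A c ∧ score c < score x} < #{x ∈ L | A x = A c} :=
    (ScoreConsistent.self score A L).card_filter_above_lt hcL
  have hU_lt : #{x ∈ L | A x = A c ∧ score c < score x} < #{x ∈ S_U | A x = A c} :=
    (card_le_card (filter_subset_filter _ (subset_univ L))).trans_lt
      (hU.card_filter_above_lt hcU)
  have hfair := hgroupfair (A c)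
  omega

/-- **Lemma 4 (Section 3.6.5).** A group-fairness-aware solution implies
individual fairness: if for every group `g` the platform selection `S_L` has at
least `min(|{c ∈ S_U : A c = g}|, |{c ∈ L : A c = g}|)` members of group `g`,
then no platform candidate is treated individually unfairly. -/
theorem lemma4_group_fair_implies_individual_fair
    {C G : Type*} [Fintype C] [DecidableEq C] [DecidableEq G]
    (score : C → ℝ) (hscore : Function.Injective score)
    (A : C → G) (L : Finset C)
    (S_U S_L : Finset C) (hSL : S_L ⊆ L)
    (hU : ScoreConsistent score A Finset.univ S_U)
    (hL : ScoreConsistent score A L S_L)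
    (hgroupfair : ∀ g : G,
      (S_L.filter (fun c => A c = g)).card ≥
        min ((S_U.filter (fun c => A c = g)).card)
            ((L.filter (fun c => A c = g)).card)) :
    ∀ c ∈ L, c ∈ S_U → c ∈ S_L :=
  lemma4_group_fair_implies_individual_fair_general score hscore A L S_U S_L hSL hU hL hgroupfair
end

section
/- Correctness of the Ideal-IFRR algorithm (projection of the universal ranking onto the platform yields an individually fair ranking): let l be a duplicate-free list of candidates (the universal representative ranking, best candidate first) and let p be a decidable predicate on candidates (membership on the platform L). For every candidate c with p c and every k, if c occurs among the first k entries of l (c ∈ l.take k), then c occurs among the first k entries of the filtered list (c ∈ (l.filter p).take k). Hence no platform member in the universal top-k is outside the Ideal-IFRR top-k. -/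
namespace List

theorem filter_take_prefix_take_filter {α : Type*} (p : α → Bool) (l : List α) (k : ℕ) :
    (l.take k).filter p <+: (l.filter p).take k :=
  prefix_take_iff.2
    ⟨(take_prefix k l).filter p, (length_filter_le p _).trans (length_take_le k l)⟩

end List

theorem ideal_IFRR_individually_fair_general
    {C : Type*} (l : List C)
    (p : C → Prop) [DecidablePred p]
    (c : C) (hc : p c) (k : ℕ) (hck : c ∈ l.take k) :
    c ∈ (l.filter (fun x => decide (p x))).take k :=
  (l.filter_take_prefix_take_filter _ k).subset (List.mem_filter.2 ⟨hck, decide_eq_true hc⟩)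

/-- Correctness of the Ideal-IFRR algorithm: projecting the universal
representative ranking `l` onto the platform (keeping only the candidates
satisfying `p`) yields an individually fair ranking. For every platform
candidate `c` and every `k`, if `c` is in the universal top-`k` (`l.take k`),
then `c` is in the Ideal-IFRR top-`k` (`(l.filter (fun x => decide (p x))).take k`). -/
theorem ideal_IFRR_individually_fair
    {C : Type*} [DecidableEq C] (l : List C) (hl : l.Nodup)
    (p : C → Prop) [DecidablePred p]
    (c : C) (hc : p c) (k : ℕ) (hck : c ∈ l.take k) :
    c ∈ (l.filter (fun x => decide (p x))).take k :=
  ideal_IFRR_individually_fair_general l p c hc k hck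
end
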